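/- arXiv:2403.09585 — 7 statements merged into one kernel-verified Lean document; each statement's English description precedes it below -/
import Mathlib

section
/- If the natural numbers are partitioned into finitely many cells N = C₁ ∪ ... ∪ C_r, then there exist an index i and an injective sequence ⟨xₙ⟩ in N such that every finite sum ∑_{t∈H} x_t (over nonempty finite sets H of indices) lies in C_i. -/
open Finset

/-- Finite sums of a sequence over nonempty finite index sets. -/
def FS (x : ℕ → ℕ) : Set ℕ :=
  {s | ∃ H : Finset ℕ, H.Nonempty ∧ s = ∑ t ∈ H, x t}

/-- Finite products of a sequence over nonempty finite index sets. -/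
def FP (x : ℕ → ℕ) : Set ℕ :=
  {s | ∃ H : Finset ℕ, H.Nonempty ∧ s = ∏ t ∈ H, x t}

/-- Block-ordered: every element of `H n` is below every element of `H (n+1)`. -/
def Blocked (H : ℕ → Finset ℕ) : Prop :=
  ∀ n, ∀ a ∈ H n, ∀ b ∈ H (n + 1), a < b

/-- `y` is a sum subsystem of `x`. -/
def SumSubsystem (x y : ℕ → ℕ) : Prop :=
  ∃ H : ℕ → Finset ℕ, (∀ n, (H n).Nonempty) ∧ Blocked H ∧
    ∀ n, y n = ∑ t ∈ H n, x t

/-- `y` is a product subsystem of `x`. -/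
def ProdSubsystem (x y : ℕ → ℕ) : Prop :=
  ∃ H : ℕ → Finset ℕ, (∀ n, (H n).Nonempty) ∧ Blocked H ∧
    ∀ n, y n = ∏ t ∈ H n, x t

/-- Additive IP set. -/
def AIP (A : Set ℕ) : Prop :=
  ∃ x : ℕ → ℕ, (∀ n, 0 < x n) ∧ FS x ⊆ A

/-- Additive IP* set. -/
def AIPStar (A : Set ℕ) : Prop :=
  ∀ B : Set ℕ, AIP B → (A ∩ B).Nonempty

/-- Multiplicative IP set. -/
def MIP (A : Set ℕ) : Prop :=
  ∃ x : ℕ → ℕ, (∀ n, 0 < x n) ∧ FP x ⊆ A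

/-- Multiplicative IP* set. -/
def MIPStar (A : Set ℕ) : Prop :=
  ∀ B : Set ℕ, MIP B → (A ∩ B).Nonempty

/-!
Mathlib's Hindman theorem (via idempotent ultrafilters) yields, for a finite cover of the positive
integers, a sequence of positive terms all of whose finite sums lie in one part. Its terms need not
be distinct, so we replace it by the sums over consecutive blocks that grow fast enough to make the
new sequence strictly increasing; finite sums of block sums are finite sums of the old sequence.
-/

theorem Hindman.pos_of_mem_FS {a : Stream' ℕ} (ha : ∀ n, 0 < a.get n) {m : ℕ}
    (hm : m ∈ Hindman.FS a) : 0 < m := by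
  induction hm with
  | head' a => exact ha 0
  | tail' a m _ ih => exact ih fun n => ha (n + 1)
  | cons' a m _ ih => exact Nat.add_pos_right _ (ih fun n => ha (n + 1))

theorem exists_AIP_of_cover {ι : Type*} [Finite ι] (C : ι → Set ℕ)
    (hcover : ∀ n, 0 < n → ∃ i, n ∈ C i) : ∃ i, AIP (C i) := by
  -- Removing `0` from each part makes the terms of the FS-set found by Hindman positive.
  have hFS_cover :
      Hindman.FS (fun _ => 1 : Stream' ℕ) ⊆ ⋃₀ Set.range fun i => C i \ {0} := by
    intro m hm
    have hm : 0 < m := Hindman.pos_of_mem_FS (fun _ => Nat.one_pos) hm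
    obtain ⟨i, hi⟩ := hcover m hm
    exact ⟨C i \ {0}, ⟨i, rfl⟩, hi, hm.ne'⟩
  obtain ⟨_, ⟨i, rfl⟩, b, hb⟩ :=
    Hindman.FS_partition_regular _ _ (Set.finite_range _) hFS_cover
  refine ⟨i, b.get, fun n => Nat.pos_of_ne_zero (hb (Hindman.FS.singleton b n)).2, ?_⟩
  rintro _ ⟨H, hH, rfl⟩
  exact (hb (Hindman.FS.finsetSum b H hH)).1

theorem Blocked.lt_of_lt {H : ℕ → Finset ℕ} (hH : Blocked H) (hne : ∀ n, (H n).Nonempty)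
    {m n : ℕ} (hmn : m < n) : ∀ a ∈ H m, ∀ b ∈ H n, a < b := by
  induction n, hmn using Nat.le_induction with
  | base => exact hH m
  | succ n _ ih =>
    intro a ha b hb
    obtain ⟨c, hc⟩ := hne n
    exact (ih a ha c hc).trans (hH n c hc b hb)

theorem SumSubsystem.FS_subset {x y : ℕ → ℕ} (h : SumSubsystem x y) : FS y ⊆ FS x := by
  obtain ⟨H, hne, hblocked, hy⟩ := h
  have hdisj : Set.univ.PairwiseDisjoint H := by
    intro m _ n _ hmn
    refine Finset.disjoint_left.mpr fun a ham han => ?_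
    rcases hmn.lt_or_gt with hlt | hlt
    · exact (hblocked.lt_of_lt hne hlt a ham a han).false
    · exact (hblocked.lt_of_lt hne hlt a han a ham).false
  rintro _ ⟨G, hG, rfl⟩
  refine ⟨G.biUnion H, hG.biUnion fun n _ => hne n, ?_⟩
  rw [Finset.sum_biUnion (hdisj.subset (Set.subset_univ _))]
  exact Finset.sum_congr rfl fun n _ => hy n

/-- Each block is made longer than the sum of all earlier terms, so its sum exceeds that of the
previous block. -/
theorem exists_strictMono_sumSubsystem {x : ℕ → ℕ} (hx : ∀ n, 0 < x n) :
    ∃ y, StrictMono y ∧ SumSubsystem x y := by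
  let c : ℕ → ℕ := fun n => Nat.rec 0 (fun _ k => k + (∑ t ∈ range k, x t) + 1) n
  have hc : ∀ n, c (n + 1) = c n + (∑ t ∈ range (c n), x t) + 1 := fun _ => rfl
  have hcmono : StrictMono c := strictMono_nat_of_lt_succ fun n => by rw [hc]; omega
  let y : ℕ → ℕ := fun n => ∑ t ∈ Ico (c n) (c (n + 1)), x t
  have hy_ge : ∀ n, (∑ t ∈ range (c n), x t) + 1 ≤ y n := fun n =>
    calc (∑ t ∈ range (c n), x t) + 1 = #(Ico (c n) (c (n + 1))) := by
          rw [Nat.card_Ico, hc]; omega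
      _ = ∑ t ∈ Ico (c n) (c (n + 1)), 1 := by simp
      _ ≤ y n := Finset.sum_le_sum fun t _ => hx t
  have hy_le : ∀ n, y n ≤ ∑ t ∈ range (c (n + 1)), x t := fun n =>
    Finset.sum_le_sum_of_subset fun t ht => mem_range.mpr (mem_Ico.mp ht).2
  refine ⟨y, strictMono_nat_of_lt_succ fun n => (hy_le n).trans_lt (hy_ge (n + 1)),
    fun n => Ico (c n) (c (n + 1)), fun n => nonempty_Ico.mpr (hcmono n.lt_succ_self),
    fun n a ha b hb => (mem_Ico.mp ha).2.trans_le (mem_Ico.mp hb).1, fun n => rfl⟩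

theorem hindman_finite_sums (r : ℕ) (C : Fin r → Set ℕ)
    (hcover : ∀ n : ℕ, ∃ i, n ∈ C i) :
    ∃ (i : Fin r) (x : ℕ → ℕ), Function.Injective x ∧
      ∀ H : Finset ℕ, H.Nonempty → (∑ t ∈ H, x t) ∈ C i := by
  obtain ⟨i, b, hb_pos, hb⟩ := exists_AIP_of_cover C fun n _ => hcover n
  obtain ⟨x, hx_mono, hx_sub⟩ := exists_strictMono_sumSubsystem hb_pos
  exact ⟨i, x, hx_mono.injective, fun H hH => hb (hx_sub.FS_subset ⟨H, hH, rfl⟩)⟩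
end

section
/- If P_f(N) is partitioned into finitely many cells C₁ ∪ ... ∪ C_r, then there exist an index i and a sequence ⟨Hₙ⟩ of nonempty finite subsets of N with max Hₙ < min H_{n+1} for all n, such that every finite union of the Hₙ lies in C_i. -/
/-!
Identify a finite set `K ⊆ ℕ` with `∑_{k ∈ K} 2 ^ k` and colour each positive integer by a cell
containing its set of binary digits. Hindman's finite sums theorem gives a sequence `b` all of whose
finite sums have one colour. Group the terms of `b` along block-ordered index sets whose sums
`z₀, z₁, …` satisfy `2 ^ zₙ ∣ zₙ₊₁` (Erdős–Ginzburg–Ziv provides each next block). Then every binary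
digit of `zₙ₊₁` exceeds every digit of `zₙ`, so the digit sets `Hₙ` of the `zₙ` are block-ordered
and the digit set of the finite sum `∑_{n ∈ G} zₙ` is `⋃_{n ∈ G} Hₙ`.
-/

open Finset

namespace Nat

theorem lt_of_mem_bitIndices {i n : ℕ} (hi : i ∈ n.bitIndices) : i < n :=
  Nat.lt_two_pow_self.trans_le (two_pow_le_of_mem_bitIndices hi)

theorem le_of_mem_bitIndices_of_two_pow_dvd {k n i : ℕ} (hdvd : 2 ^ k ∣ n)
    (hi : i ∈ n.bitIndices) : k ≤ i := by
  obtain ⟨m, rfl⟩ := hdvd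
  rw [bitIndices_two_pow_mul, List.mem_map] at hi
  obtain ⟨j, -, rfl⟩ := hi
  exact le_add_self

theorem toFinset_bitIndices_nonempty {n : ℕ} (hn : n ≠ 0) : n.bitIndices.toFinset.Nonempty :=
  nonempty_iff_ne_empty.2 fun h => hn (by rw [← sum_toFinset_bitIndices_two_pow n, h, sum_empty])

theorem toFinset_bitIndices_sum {ι : Type*} [DecidableEq ι] {G : Finset ι} {z : ι → ℕ}
    (hdisj : (G : Set ι).PairwiseDisjoint fun n => (z n).bitIndices.toFinset) :
    (∑ n ∈ G, z n).bitIndices.toFinset = G.biUnion fun n => (z n).bitIndices.toFinset := by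
  have hsum : ∑ n ∈ G, z n = ∑ i ∈ G.biUnion (fun n => (z n).bitIndices.toFinset), 2 ^ i := by
    simp only [sum_biUnion hdisj, sum_toFinset_bitIndices_two_pow]
  rw [hsum, toFinset_bitIndices_sum_two_pow]

end Nat

open Function

namespace Blocked

variable {H : ℕ → Finset ℕ}

theorem lt_of_lt_s2 (hH : Blocked H) (hne : ∀ n, (H n).Nonempty) {m n : ℕ} (hmn : m < n)
    {a c : ℕ} (ha : a ∈ H m) (hc : c ∈ H n) : a < c := by
  induction n, hmn using Nat.le_induction generalizing c with
  | base => exact hH m a ha c hc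
  | succ n _ ih =>
    obtain ⟨x, hx⟩ := hne n
    exact (ih hx).trans (hH n x hx c hc)

theorem pairwise_disjoint (hH : Blocked H) (hne : ∀ n, (H n).Nonempty) :
    Pairwise (Disjoint on H) :=
  (pairwise_disjoint_on H).2 fun _ _ hmn =>
    Finset.disjoint_left.2 fun _ ha ha' => (hH.lt_of_lt_s2 hne hmn ha ha').false

end Blocked

theorem blocked_toFinset_bitIndices {z : ℕ → ℕ} (hdvd : ∀ n, 2 ^ z n ∣ z (n + 1)) :
    Blocked fun n => (z n).bitIndices.toFinset := fun n _ ha _ hc =>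
  (Nat.lt_of_mem_bitIndices (List.mem_toFinset.1 ha)).trans_le
    (Nat.le_of_mem_bitIndices_of_two_pow_dvd (hdvd n) (List.mem_toFinset.1 hc))

theorem exists_dvd_sum_above (b : ℕ → ℕ) {d : ℕ} (hd : 0 < d) (S : Finset ℕ) :
    ∃ T : Finset ℕ, T.Nonempty ∧ (∀ a ∈ S, ∀ t ∈ T, a < t) ∧ d ∣ ∑ t ∈ T, b t := by
  set N := S.sup id + 1
  obtain ⟨T, hT, hcard, hdvd⟩ :=
    Int.erdos_ginzburg_ziv (n := d) (fun t => (b t : ℤ)) (s := Ico N (N + (2 * d - 1))) (by simp)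
  refine ⟨T, card_pos.1 (hcard ▸ hd), fun a ha t ht => ?_, by exact_mod_cast hdvd⟩
  exact (Nat.lt_succ_of_le (le_sup (f := id) ha)).trans_le (mem_Ico.1 (hT ht)).1

theorem exists_blocked_dvd_sum (b d : ℕ → ℕ) (hd : ∀ k, 0 < d k) :
    ∃ F : ℕ → Finset ℕ, (∀ n, (F n).Nonempty) ∧ Blocked F ∧
      ∀ n, d (∑ t ∈ F n, b t) ∣ ∑ t ∈ F (n + 1), b t := by
  choose next hne hlt hdvd using fun S => exists_dvd_sum_above b (hd (∑ t ∈ S, b t)) S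
  have hsucc : ∀ n, next^[n + 1] ∅ = next (next^[n] ∅) := fun n =>
    iterate_succ_apply' next n ∅
  refine ⟨fun n => next^[n + 1] ∅, fun n => ?_, fun n => ?_, fun n => ?_⟩
  · dsimp only; rw [hsucc]; exact hne _
  · dsimp only; rw [hsucc (n + 1)]; exact hlt _
  · dsimp only; rw [hsucc (n + 1)]; exact hdvd _

theorem hindman_finite_unions_blocked (r : ℕ) (C : Fin r → Set (Finset ℕ))
    (hcover : ∀ K : Finset ℕ, K.Nonempty → ∃ i, K ∈ C i) :
    ∃ (i : Fin r) (H : ℕ → Finset ℕ),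
      (∀ n, (H n).Nonempty) ∧ Blocked H ∧
      ∀ G : Finset ℕ, G.Nonempty → G.biUnion H ∈ C i := by
  classical
  -- `0 < n` stops Hindman's theorem from returning the zero sequence, whose digit sets are empty.
  let D : Fin r → Set ℕ := fun i => {n | 0 < n ∧ n.bitIndices.toFinset ∈ C i}
  have hD : Hindman.FS (Stream'.const 1) ⊆ ⋃₀ Set.range D := by
    intro m hm
    have hpos := Hindman.pos_of_mem_FS (fun _ => Nat.one_pos) hm
    obtain ⟨i, hi⟩ := hcover _ (Nat.toFinset_bitIndices_nonempty hpos.ne')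
    exact ⟨D i, ⟨i, rfl⟩, hpos, hi⟩
  obtain ⟨_, ⟨i, rfl⟩, b, hb⟩ :=
    Hindman.FS_partition_regular _ _ (Set.finite_range D) hD
  obtain ⟨F, hFne, hF, hdvd⟩ := exists_blocked_dvd_sum b.get (2 ^ ·) fun _ => by positivity
  set z : ℕ → ℕ := fun n => ∑ t ∈ F n, b.get t
  have hzD : ∀ G : Finset ℕ, G.Nonempty → ∑ n ∈ G, z n ∈ D i := fun G ⟨n, hn⟩ => by
    refine hb ?_
    rw [← sum_biUnion ((hF.pairwise_disjoint hFne).set_pairwise _)]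
    exact Hindman.FS.finsetSum _ _ ((hFne n).mono (subset_biUnion_of_mem F hn))
  have hH : Blocked fun n => (z n).bitIndices.toFinset := blocked_toFinset_bitIndices hdvd
  have hHne : ∀ n, (z n).bitIndices.toFinset.Nonempty := fun n =>
    Nat.toFinset_bitIndices_nonempty (hb (Hindman.FS.finsetSum b (F n) (hFne n))).1.ne'
  refine ⟨i, _, hHne, hH, fun G hG => ?_⟩
  rw [← Nat.toFinset_bitIndices_sum ((hH.pairwise_disjoint hHne).set_pairwise _)]
  exact (hzD G hG).2
end

section
/- Let ⟨xₙ⟩ be a sequence in N and suppose FS(⟨xₙ⟩) is partitioned into finitely many cells C₁ ∪ ... ∪ C_r. Then there exist an index i and a sum subsystem ⟨yₙ⟩ of ⟨xₙ⟩ such that FS(⟨yₙ⟩) ⊆ C_i. -/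
open Finset

/-!
Take an idempotent ultrafilter `U` on `ℕ` containing, for every `n`, the finite sums of `x` with
indices `≥ n`; such a `U` exists because these sets are closed under adding a later block, so the
ultrafilters containing all of them form a compact subsemigroup. One cell `C i` lies in `U`.
Idempotence means that for `U`-almost every `a ∈ A` the shifted set `A - a` is again in `U`, so
we may pick a block sum `y₀ ∈ A`, replace `A` by `A ∩ (A - y₀)`, and repeat with later blocks.
-/

open Filter

attribute [local instance] Ultrafilter.add Ultrafilter.addSemigroup

section

variable {M : Type*} [AddCommMonoid M]

def tailSums (x : ℕ → M) (n : ℕ) : Set M :=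
  {s | ∃ H : Finset ℕ, H.Nonempty ∧ (∀ t ∈ H, n ≤ t) ∧ s = ∑ t ∈ H, x t}

theorem tailSums_antitone (x : ℕ → M) : Antitone (tailSums x) := by
  rintro n m hnm s ⟨H, hH, hm, rfl⟩
  exact ⟨H, hH, fun t ht => hnm.trans (hm t ht), rfl⟩

theorem sum_add_mem_tailSums {x : ℕ → M} {n : ℕ} {H : Finset ℕ} (hH : H.Nonempty)
    (hn : ∀ t ∈ H, n ≤ t) {s : M} (hs : s ∈ tailSums x (H.max' hH + 1)) :
    ∑ t ∈ H, x t + s ∈ tailSums x n := by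
  obtain ⟨K, hK, hmax, rfl⟩ := hs
  have hlt : ∀ a ∈ H, ∀ b ∈ K, a < b := fun a ha b hb =>
    Nat.lt_of_le_of_lt (H.le_max' a ha) (hmax b hb)
  have hdisj : Disjoint H K :=
    disjoint_left.2 fun t htH htK => (hlt t htH t htK).false
  refine ⟨H ∪ K, hH.mono subset_union_left, fun t ht => ?_, (sum_union hdisj).symm⟩
  rcases mem_union.1 ht with ht | ht
  · exact hn t ht
  · exact (hn _ (H.max'_mem hH)).trans (hlt _ (H.max'_mem hH) t ht).le

theorem exists_idempotent_ultrafilter_tailSums (x : ℕ → M) :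
    ∃ U : Ultrafilter M, U + U = U ∧ ∀ n, tailSums x n ∈ U := by
  let S : Set (Ultrafilter M) := ⋂ n, {U | tailSums x n ∈ U}
  have hclosed : ∀ n, IsClosed {U : Ultrafilter M | tailSums x n ∈ U} := fun n =>
    ultrafilter_isClosed_basic _
  have hne : S.Nonempty :=
    IsCompact.nonempty_iInter_of_sequence_nonempty_isCompact_isClosed _
      (fun n U hU => Filter.mem_of_superset hU (tailSums_antitone x n.le_succ))
      (fun n => ⟨pure (x n), Ultrafilter.mem_pure.2 ⟨{n}, singleton_nonempty n, by simp, by simp⟩⟩)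
      (hclosed 0).isCompact hclosed
  have hadd : ∀ U ∈ S, ∀ V ∈ S, U + V ∈ S := by
    intro U hU V hV
    simp only [S, Set.mem_iInter, Set.mem_ofPred_eq] at hU hV ⊢
    intro n
    rw [← Ultrafilter.mem_coe, ← Filter.eventually_mem_set, Ultrafilter.eventually_add]
    filter_upwards [hU n] with a ⟨H, hH, hn, ha⟩
    filter_upwards [hV (H.max' hH + 1)] with b hb
    exact ha ▸ sum_add_mem_tailSums hH hn hb
  obtain ⟨U, hU, hidem⟩ := exists_idempotent_in_compact_add_subsemigroup
    Ultrafilter.continuous_add_left S hne (isClosed_iInter hclosed).isCompact hadd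
  exact ⟨U, hidem, Set.mem_iInter.1 hU⟩

theorem exists_block_sum_mem_of_idempotent {x : ℕ → M} {U : Ultrafilter M} (hU : U + U = U)
    (htail : ∀ n, tailSums x n ∈ U) {A : Set M} (hA : A ∈ U) (n : ℕ) :
    ∃ H : Finset ℕ, H.Nonempty ∧ (∀ t ∈ H, n ≤ t) ∧ ∑ t ∈ H, x t ∈ A ∧
      {m | ∑ t ∈ H, x t + m ∈ A} ∈ U := by
  have hAA : ∀ᶠ a in U, ∀ᶠ b in U, a + b ∈ A := by
    rw [← Ultrafilter.eventually_add, hU]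
    exact hA
  obtain ⟨_, ⟨ha, H, hH, hn, rfl⟩, hshift⟩ := (Filter.eventually_mem_set.2 hA
    |>.and (Filter.eventually_mem_set.2 (htail n)) |>.and hAA).exists
  exact ⟨H, hH, hn, ha, hshift⟩

theorem sum_mem_of_succ_subset {σ : ℕ → M} {s : ℕ → Set M} (hσ : ∀ k, σ k ∈ s k)
    (hs : ∀ k, s (k + 1) ⊆ s k ∩ {m | σ k + m ∈ s k}) {K : Finset ℕ} (hK : K.Nonempty) :
    ∀ j, (∀ k ∈ K, j ≤ k) → ∑ k ∈ K, σ k ∈ s j := by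
  have hanti : Antitone s :=
    antitone_nat_of_succ_le fun k => (hs k).trans Set.inter_subset_left
  induction K using Finset.induction_on_min with
  | empty => exact absurd hK not_nonempty_empty
  | insert a K hlt ih =>
    intro j hj
    have hja : j ≤ a := hj a (mem_insert_self a K)
    rw [sum_insert fun haK => (hlt a haK).false]
    rcases K.eq_empty_or_nonempty with rfl | hK'
    · simpa using hanti hja (hσ a)
    · exact hanti hja (hs a (ih hK' (a + 1) hlt)).2

theorem exists_blocked_sums_mem_of_idempotent {x : ℕ → M} {U : Ultrafilter M}
    (hU : U + U = U) (htail : ∀ n, tailSums x n ∈ U) {A : Set M} (hA : A ∈ U) :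
    ∃ H : ℕ → Finset ℕ, (∀ n, (H n).Nonempty) ∧ Blocked H ∧
      ∀ K : Finset ℕ, K.Nonempty → ∑ k ∈ K, ∑ t ∈ H k, x t ∈ A := by
  -- A state is the current `U`-large set together with a lower bound for the next block.
  have step : ∀ p : {B : Set M // B ∈ U} × ℕ, ∃ (H : Finset ℕ) (q : {B : Set M // B ∈ U} × ℕ),
      H.Nonempty ∧ (∀ t ∈ H, p.2 ≤ t ∧ t < q.2) ∧ ∑ t ∈ H, x t ∈ p.1.1 ∧
        q.1.1 ⊆ p.1.1 ∩ {m | ∑ t ∈ H, x t + m ∈ p.1.1} := by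
    rintro ⟨⟨B, hB⟩, n⟩
    obtain ⟨H, hH, hn, hsum, hshift⟩ := exists_block_sum_mem_of_idempotent hU htail hB n
    exact ⟨H, (⟨_, inter_mem hB hshift⟩, H.max' hH + 1), hH,
      fun t ht => ⟨hn t ht, Nat.lt_succ_of_le (H.le_max' t ht)⟩, hsum, subset_rfl⟩
  choose block next hne hbound hsum hnext using step
  let p : ℕ → {B : Set M // B ∈ U} × ℕ := fun k => next^[k] (⟨A, hA⟩, 0)
  have hp : ∀ k, p (k + 1) = next (p k) := fun k => Function.iterate_succ_apply' _ _ _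
  refine ⟨fun k => block (p k), fun k => hne _, fun k a ha b hb => ?_, fun K hK => ?_⟩
  · exact (hbound _ a ha).2.trans_le (hp k ▸ (hbound _ b hb).1)
  · exact sum_mem_of_succ_subset (s := fun k => (p k).1.1) (fun k => hsum _)
      (fun k => hp k ▸ hnext _) hK 0 fun k _ => k.zero_le

end

theorem sum_subsystem_partition (x : ℕ → ℕ) (r : ℕ) (C : Fin r → Set ℕ)
    (hcover : ∀ s ∈ FS x, ∃ i, s ∈ C i) :
    ∃ (i : Fin r) (y : ℕ → ℕ), SumSubsystem x y ∧ FS y ⊆ C i := by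
  obtain ⟨U, hU, htail⟩ := exists_idempotent_ultrafilter_tailSums x
  have hFS : ∀ᶠ s in U, s ∈ FS x :=
    Filter.mem_of_superset (htail 0) fun s ⟨H, hH, _, hs⟩ => ⟨H, hH, hs⟩
  obtain ⟨i, hi⟩ := Ultrafilter.eventually_exists_iff.1 (hFS.mono hcover)
  obtain ⟨H, hH, hblocked, hsums⟩ := exists_blocked_sums_mem_of_idempotent hU htail hi
  refine ⟨i, fun n => ∑ t ∈ H n, x t, ⟨H, hH, hblocked, fun n => rfl⟩, ?_⟩
  rintro _ ⟨K, hK, rfl⟩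
  exact hsums K hK
end

section
/- If A and B are both AIP* subsets of N, then A ∩ B is an AIP* set. -/
open Finset

/-!
By Galvin–Glazer, an additive IP set `FS x` with `x` positive is a member of some idempotent
ultrafilter `U` on `ℕ` avoiding `0`. Every AIP* set `D` lies in every such `U`: otherwise `Dᶜ` would
be `U`-large and, by Hindman's argument, contain `FS b` for a positive sequence `b`, contradicting
that `D` meets every AIP set. Hence `A`, `B` and `FS x` all belong to `U`, so they intersect.
-/

attribute [local instance] Ultrafilter.add

theorem hindman_FS_eq_FS (a : Stream' ℕ) : Hindman.FS a = FS a.get := by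
  refine Set.Subset.antisymm (fun m hm => ?_) ?_
  · induction hm with
    | head' a => exact ⟨{0}, singleton_nonempty 0, by simp [Stream'.head]⟩
    | tail' a m _ ih =>
      obtain ⟨H, hH, rfl⟩ := ih
      exact ⟨H.map ⟨Nat.succ, Nat.succ_injective⟩, hH.map, by rw [sum_map]; rfl⟩
    | cons' a m _ ih =>
      obtain ⟨H, hH, rfl⟩ := ih
      refine ⟨insert 0 (H.map ⟨Nat.succ, Nat.succ_injective⟩), insert_nonempty _ _, ?_⟩
      rw [sum_insert (by simp), sum_map]
      rfl
  · rintro m ⟨H, hH, rfl⟩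
    exact Hindman.FS.finsetSum a H hH

theorem pos_of_mem_FS {x : ℕ → ℕ} (hx : ∀ n, 0 < x n) {m : ℕ} (hm : m ∈ FS x) : 0 < m := by
  obtain ⟨H, hH, rfl⟩ := hm
  exact sum_pos (fun i _ => hx i) hH

theorem AIP.exists_add_idempotent_mem {C : Set ℕ} (hC : AIP C) :
    ∃ U : Ultrafilter ℕ, U + U = U ∧ Set.Ioi 0 ∈ U ∧ C ∈ U := by
  obtain ⟨x, hx, hxC⟩ := hC
  obtain ⟨U, hUU, hFS⟩ := Hindman.exists_idempotent_ultrafilter_le_FS x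
  have hFS : FS x ∈ U := hindman_FS_eq_FS x ▸ hFS
  exact ⟨U, hUU, U.mem_of_superset hFS fun _ => pos_of_mem_FS hx,
    U.mem_of_superset hFS hxC⟩

theorem AIPStar.mem_of_add_idempotent {D : Set ℕ} (hD : AIPStar D) {U : Ultrafilter ℕ}
    (hUU : U + U = U) (hpos : Set.Ioi 0 ∈ U) : D ∈ U := by
  by_contra hDU
  obtain ⟨b, hb⟩ := Hindman.exists_FS_of_large U hUU (Dᶜ ∩ Set.Ioi 0)
    (Filter.inter_mem (U.compl_mem_iff_notMem.mpr hDU) hpos)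
  rw [hindman_FS_eq_FS] at hb
  have hbpos : ∀ n, 0 < b.get n := fun n => (hb ⟨{n}, singleton_nonempty n, by simp⟩).2
  obtain ⟨m, hmD, hmb⟩ := hD _ ⟨b.get, hbpos, subset_rfl⟩
  exact (hb hmb).1 hmD

theorem aipstar_inter (A B : Set ℕ) (hA : AIPStar A) (hB : AIPStar B) :
    AIPStar (A ∩ B) := by
  intro C hC
  obtain ⟨U, hUU, hpos, hCU⟩ := hC.exists_add_idempotent_mem
  have hABU : A ∩ B ∈ U :=
    Filter.inter_mem (hA.mem_of_add_idempotent hUU hpos) (hB.mem_of_add_idempotent hUU hpos)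
  exact U.nonempty_of_mem (Filter.inter_mem hABU hCU)
end

section
/- If A and B are MIP* subsets of N, then A ∩ B is an MIP* set. -/
open Finset

/-!
By Hindman's theorem the MIP sets are partition regular: if an MIP set `C` is covered by `A`
and `Aᶜ`, one of `A ∩ C`, `Aᶜ` is MIP. For an MIP* set `A` it cannot be `Aᶜ`, so `A ∩ C` is
MIP, and an MIP* set `B` meets it.
-/

theorem hindmanFP_eq_FP (a : Stream' ℕ) : Hindman.FP a = FP a.get := by
  refine subset_antisymm (fun m hm => ?_)
    fun m ⟨H, hne, hm⟩ => hm ▸ Hindman.FP.finsetProd a H hne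
  induction hm with
  | head' a => exact ⟨{0}, singleton_nonempty _, by simp [Stream'.head]⟩
  | tail' a m _ ih =>
    obtain ⟨H, hne, rfl⟩ := ih
    exact ⟨H.map (addRightEmbedding 1), hne.map, by simp [Stream'.get_tail]⟩
  | cons' a m _ ih =>
    obtain ⟨H, hne, rfl⟩ := ih
    refine ⟨insert 0 (H.map (addRightEmbedding 1)), insert_nonempty _ _, ?_⟩
    rw [prod_insert (by simp)]
    simp [Stream'.get_tail, Stream'.head]

theorem zero_notMem_FP {x : ℕ → ℕ} (hx : ∀ n, 0 < x n) : 0 ∉ FP x := by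
  rintro ⟨H, -, h⟩
  exact (prod_pos fun t _ => hx t).ne h

theorem MIP.of_FP_subset {D : Set ℕ} {y : ℕ → ℕ} (h0 : 0 ∉ FP y) (hy : FP y ⊆ D) :
    MIP D := by
  refine ⟨y, fun n => Nat.pos_of_ne_zero fun hn => h0 ?_, hy⟩
  exact ⟨{n}, singleton_nonempty n, by simp [hn]⟩

theorem MIP.mip_or_mip_of_subset_union {C D E : Set ℕ} (hC : MIP C) (hCDE : C ⊆ D ∪ E) :
    MIP D ∨ MIP E := by
  obtain ⟨x, hx, hxC⟩ := hC
  -- Cutting the parts down to `FP x` keeps `0` out of them, so Hindman's sequence is positive.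
  have hcover : Hindman.FP x ⊆ ⋃₀ {D ∩ FP x, E ∩ FP x} := by
    refine (hindmanFP_eq_FP x).le.trans ?_
    rw [Set.sUnion_pair, ← Set.union_inter_distrib_right]
    exact Set.subset_inter (hxC.trans hCDE) le_rfl
  obtain ⟨c, hc, y, hy⟩ :=
    Hindman.FP_partition_regular x _ ((Set.finite_singleton _).insert _) hcover
  rw [hindmanFP_eq_FP] at hy
  have hpart (F : Set ℕ) (hF : FP y.get ⊆ F ∩ FP x) : MIP F :=
    .of_FP_subset (fun h => zero_notMem_FP hx (hF h).2) (hF.trans Set.inter_subset_left)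
  rcases hc with rfl | rfl
  exacts [.inl (hpart _ hy), .inr (hpart _ hy)]

theorem MIPStar.mip_inter {A C : Set ℕ} (hA : MIPStar A) (hC : MIP C) : MIP (A ∩ C) := by
  have hcover : C ⊆ (A ∩ C) ∪ Aᶜ := fun m hm => (em (m ∈ A)).imp (⟨·, hm⟩) id
  refine (hC.mip_or_mip_of_subset_union hcover).resolve_right fun hAc => ?_
  obtain ⟨m, hmA, hmAc⟩ := hA _ hAc
  exact hmAc hmA

theorem mipstar_inter (A B : Set ℕ) (hA : MIPStar A) (hB : MIPStar B) :
    MIPStar (A ∩ B) := by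
  intro C hC
  obtain ⟨m, hmB, hmA, hmC⟩ := hB _ (hA.mip_inter hC)
  exact ⟨m, ⟨hmA, hmB⟩, hmC⟩
end

section
/- Let A be an MIP* subset of N. Then there exists a sequence ⟨xₙ⟩ with xₙ ≥ 2 such that EXP₁(⟨xₙ⟩) ∪ EXP₂(⟨xₙ⟩) ⊆ A, where EXP₁(⟨xₙ⟩) is the set of iterated exponential towers x_{i_k}^{x_{i_{k-1}}^{...^{x_{i_1}}}} with i_1 < i_2 < ... < i_k, and EXP₂(⟨xₙ⟩) is the set of expressions x_{i_1}^{x_{i_2} ⋯ x_{i_k}} with i_1 < i_2 < ... < i_k. -/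
open Finset

/-- Iterated exponential towers over strictly increasing finite index lists. -/
def EXP1 (x : ℕ → ℕ) : Set ℕ :=
  {m | ∃ l : List ℕ, l ≠ [] ∧ l.Chain' (· < ·) ∧
        m = l.foldl (fun a i => x i ^ a) 1}

/-- A base raised to a product of strictly later terms. -/
def EXP2 (x : ℕ → ℕ) : Set ℕ :=
  {m | ∃ (i : ℕ) (F : Finset ℕ), (∀ j ∈ F, i < j) ∧
        m = x i ^ (∏ j ∈ F, x j)}

/-!
Let `U` be a multiplicatively idempotent ultrafilter on `ℕ` all of whose members are additive IP
sets; such ultrafilters form a closed subsemigroup of `(βℕ, ·)`, nonempty since it contains every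
nonprincipal additive idempotent, so one exists. By Hindman's theorem every member of `U` is MIP,
hence every MIP* set belongs to `U`. Each `{b | b ^ t ∈ A}` is again MIP*, and since `A` meets
`b ^ FS(d)` for every additive IP set `FS(d)`, for `U`-most `b` we have `b ^ e ∈ A` for `U`-most `e`.

The sequence is chosen greedily in `U`-large sets: `x n` must put `x n ^ t` in `A` for every tower
`t` of earlier terms, and for every `v = x i ^ (x j₁ ⋯ x jₘ)` built so far (which satisfies
`v ^ e ∈ A` for `U`-most `e`) it must give `v ^ x n ∈ A` and `v ^ (x n * e) ∈ A` for `U`-most `e`.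
Idempotence of `U` is what keeps the last requirement `U`-large.
-/

open Filter

attribute [local instance] Ultrafilter.mul Ultrafilter.add Ultrafilter.semigroup
  Ultrafilter.addSemigroup

lemma AIP.infinite {B : Set ℕ} (hB : AIP B) : B.Infinite := by
  obtain ⟨x, hpos, hsub⟩ := hB
  refine Set.infinite_of_not_bddAbove fun ⟨N, hN⟩ => ?_
  have hmem : ∑ t ∈ range (N + 1), x t ∈ B := hsub ⟨range (N + 1), nonempty_range_add_one, rfl⟩
  have hle : N + 1 ≤ ∑ t ∈ range (N + 1), x t := by
    simpa using card_nsmul_le_sum (range (N + 1)) x 1 fun t _ => hpos t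
  have := hN hmem
  omega

lemma AIP.of_mul_preimage {B : Set ℕ} {n : ℕ} (hn : 0 < n) (h : AIP ((n * ·) ⁻¹' B)) : AIP B := by
  obtain ⟨d, hpos, hsub⟩ := h
  refine ⟨fun i => n * d i, fun i => Nat.mul_pos hn (hpos i), ?_⟩
  rintro _ ⟨H, hH, rfl⟩
  rw [← mul_sum]
  exact hsub ⟨H, hH, rfl⟩

lemma MIPStar.pow_preimage {A : Set ℕ} (hA : MIPStar A) (t : ℕ) : MIPStar ((· ^ t) ⁻¹' A) := by
  rintro B ⟨z, hz, hsub⟩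
  obtain ⟨_, hmem, H, hH, rfl⟩ :=
    hA (FP fun i => z i ^ t) ⟨_, fun i => pow_pos (hz i) t, subset_rfl⟩
  refine ⟨∏ j ∈ H, z j, ?_, hsub ⟨H, hH, rfl⟩⟩
  rwa [Set.mem_preimage, ← prod_pow]

lemma MIPStar.exists_pow_mem {A E : Set ℕ} (hA : MIPStar A) {b : ℕ} (hb : 0 < b) (hE : AIP E) :
    ∃ e ∈ E, b ^ e ∈ A := by
  obtain ⟨d, -, hsub⟩ := hE
  obtain ⟨_, hmem, H, hH, rfl⟩ := hA (FP fun i => b ^ d i) ⟨_, fun i => pow_pos hb _, subset_rfl⟩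
  exact ⟨∑ t ∈ H, d t, hsub ⟨H, hH, rfl⟩, by rwa [← prod_pow_eq_pow_sum]⟩

lemma MIPStar.mem_ultrafilter {A : Set ℕ} {U : Ultrafilter ℕ} (hU : ∀ B ∈ U, MIP B)
    (hA : MIPStar A) : A ∈ U := by
  by_contra h
  obtain ⟨m, hmA, hmAc⟩ := hA _ (hU _ (Ultrafilter.compl_mem_iff_notMem.2 h))
  exact hmAc hmA

def aipUltrafilters : Set (Ultrafilter ℕ) := {U | ∀ B ∈ U, AIP B}

lemma isClosed_aipUltrafilters : IsClosed aipUltrafilters := by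
  have : aipUltrafiltersᶜ = ⋃ B ∈ {B : Set ℕ | ¬AIP B}, {U : Ultrafilter ℕ | B ∈ U} := by
    ext U
    simp [aipUltrafilters, and_comm]
  exact isOpen_compl_iff.1 (this ▸ isOpen_biUnion fun B _ => ultrafilter_isOpen_basic B)

lemma eventually_two_le_of_mem_aipUltrafilters {U : Ultrafilter ℕ} (hU : U ∈ aipUltrafilters) :
    ∀ᶠ n in U, 2 ≤ n := by
  by_contra h
  exact (hU _ (Ultrafilter.eventually_not.2 h)).infinite
    ((Set.finite_lt_nat 2).subset fun n hn => by simpa using hn)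

lemma mul_mem_aipUltrafilters {U V : Ultrafilter ℕ} (hU : U ∈ aipUltrafilters)
    (hV : V ∈ aipUltrafilters) : U * V ∈ aipUltrafilters := by
  intro B hB
  obtain ⟨n, hn, hnB⟩ := ((eventually_two_le_of_mem_aipUltrafilters hU).and
    ((Ultrafilter.eventually_mul U V (· ∈ B)).1 hB)).exists
  exact AIP.of_mul_preimage (by omega) (hV _ hnB)

lemma aipUltrafilters_nonempty : aipUltrafilters.Nonempty := by
  obtain ⟨W, hWpos, idem⟩ := exists_idempotent_in_compact_add_subsemigroup
    Ultrafilter.continuous_add_left {W : Ultrafilter ℕ | {n | 0 < n} ∈ W} ⟨pure 1, by simp⟩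
    (ultrafilter_isClosed_basic _).isCompact fun V hV W hW => by
      change ∀ᶠ n in V, ∀ᶠ m in W, 0 < n + m
      filter_upwards [hV] with n hn
      filter_upwards [hW] with m _
      omega
  refine ⟨W, fun B hB => ?_⟩
  obtain ⟨a, ha⟩ := Hindman.exists_FS_of_large W idem _ (inter_mem hB hWpos)
  exact ⟨fun i => a.get i, fun i => (ha (Hindman.FS.singleton a i)).2,
    fun _ ⟨H, hH, h⟩ => h ▸ (ha (Hindman.FS.finsetSum a H hH)).1⟩

lemma exists_mul_idempotent_mem_aipUltrafilters :
    ∃ U ∈ aipUltrafilters, U * U = U :=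
  exists_idempotent_in_compact_subsemigroup Ultrafilter.continuous_mul_left _
    aipUltrafilters_nonempty isClosed_aipUltrafilters.isCompact
    fun _ hU _ hV => mul_mem_aipUltrafilters hU hV

lemma Ultrafilter.eventually_mem_and_eventually_mul_mem {U : Ultrafilter ℕ} (idem : U * U = U)
    {B : Set ℕ} (hB : B ∈ U) : ∀ᶠ b in U, b ∈ B ∧ ∀ᶠ e in U, b * e ∈ B :=
  inter_mem hB (by rwa [← idem] at hB)

lemma mip_of_mem_aipUltrafilters {U : Ultrafilter ℕ} (hU : U ∈ aipUltrafilters)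
    (idem : U * U = U) {B : Set ℕ} (hB : B ∈ U) : MIP B := by
  have hpos : ∀ᶠ n in U, 0 < n :=
    (eventually_two_le_of_mem_aipUltrafilters hU).mono fun n hn => by omega
  obtain ⟨a, ha⟩ := Hindman.exists_FP_of_large U idem _ (inter_mem hB hpos)
  exact ⟨fun i => a.get i, fun i => (ha (Hindman.FP.singleton a i)).2,
    fun _ ⟨H, hH, h⟩ => h ▸ (ha (Hindman.FP.finsetProd a H hH)).1⟩

lemma MIPStar.eventually_eventually_pow_mem {A : Set ℕ} (hA : MIPStar A) {U : Ultrafilter ℕ}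
    (hU : U ∈ aipUltrafilters) : ∀ᶠ b in U, ∀ᶠ e in U, b ^ e ∈ A := by
  by_contra h
  obtain ⟨b, hb, hbA⟩ := ((eventually_two_le_of_mem_aipUltrafilters hU).and
    (Ultrafilter.eventually_not.2 h)).exists
  obtain ⟨e, he, heA⟩ := hA.exists_pow_mem (b := b) (by omega)
    (hU _ (Ultrafilter.eventually_not.2 hbA))
  exact he heA

theorem exists_seq_forall_mem {α : Type*} [Nonempty α] (G : (ℕ → α) → ℕ → Set α)
    (hG : ∀ n x y, (∀ i < n, x i = y i) → G x n = G y n)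
    (hne : ∀ n x, (∀ k < n, x k ∈ G x k) → (G x n).Nonempty) :
    ∃ x : ℕ → α, ∀ n, x n ∈ G x n := by
  classical
  let next (n : ℕ) (x : ℕ → α) : α :=
    if h : ∀ k < n, x k ∈ G x k then (hne n x h).some else Classical.arbitrary α
  let pre (n : ℕ) : ℕ → α :=
    Nat.rec (fun _ => Classical.arbitrary α) (fun n x => Function.update x n (next n x)) n
  have pre_succ_of_lt {n i : ℕ} (h : i < n) : pre (n + 1) i = pre n i :=
    Function.update_of_ne h.ne _ _
  have pre_stable (n : ℕ) : ∀ i < n, pre n i = pre (i + 1) i := by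
    induction n with
    | zero => intro i h; omega
    | succ n ih =>
      intro i h
      rcases Nat.lt_succ_iff_lt_or_eq.1 h with h | rfl
      · rw [pre_succ_of_lt h, ih i h]
      · rfl
  have pre_good (n : ℕ) : ∀ k < n, pre n k ∈ G (pre n) k := by
    induction n with
    | zero => intro k h; omega
    | succ n ih =>
      intro k hk
      rw [hG k _ (pre n) fun i hi => pre_succ_of_lt (by omega)]
      rcases Nat.lt_succ_iff_lt_or_eq.1 hk with hk | rfl
      · rw [pre_succ_of_lt hk]
        exact ih k hk
      · change Function.update (pre k) k (next k (pre k)) k ∈ _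
        rw [Function.update_self]
        simp only [next, dif_pos ih]
        exact (hne k _ ih).some_mem
  refine ⟨fun i => pre (i + 1) i, fun n => ?_⟩
  rw [← hG n _ _ fun i hi => pre_stable (n + 1) i (by omega)]
  exact pre_good (n + 1) n n.lt_add_one

def tower (x : ℕ → ℕ) (S : Finset ℕ) : ℕ := S.sort.foldl (fun a i => x i ^ a) 1

lemma tower_congr {x y : ℕ → ℕ} {S : Finset ℕ} (h : ∀ i ∈ S, x i = y i) :
    tower x S = tower y S :=
  List.foldl_ext _ _ _ fun _ i hi => by rw [h i ((mem_sort _).1 hi)]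

lemma foldl_pow_eq_tower (x : ℕ → ℕ) {l : List ℕ} (hl : l.Pairwise (· < ·)) :
    l.foldl (fun a i => x i ^ a) 1 = tower x l.toFinset := by
  rw [tower, (List.toFinset_sort _ (hl.imp ne_of_lt)).2 (hl.imp le_of_lt)]

/-- The last clause passes the invariant `v ∈ A ∧ ∀ᶠ e in U, v ^ e ∈ A` of the terms
`v = x i ^ (x j₁ ⋯ x jₘ)` already built on to `v ^ b`. -/
def nextCandidates (A : Set ℕ) (U : Ultrafilter ℕ) (x : ℕ → ℕ) (n : ℕ) : Set ℕ :=
  {b | 2 ≤ b ∧ (∀ S ∈ (range n).powerset, b ^ tower x S ∈ A) ∧ (∀ᶠ e in U, b ^ e ∈ A) ∧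
    ∀ i ∈ range n, ∀ S ∈ (Ioo i n).powerset,
      (x i ^ ∏ j ∈ S, x j) ^ b ∈ A ∧ ∀ᶠ e in U, (x i ^ ∏ j ∈ S, x j) ^ (b * e) ∈ A}

section Candidates

variable {A : Set ℕ} {U : Ultrafilter ℕ}

lemma nextCandidates_congr {x y : ℕ → ℕ} {n : ℕ} (h : ∀ i < n, x i = y i) :
    nextCandidates A U x n = nextCandidates A U y n := by
  have htower : ∀ S ∈ (range n).powerset, tower x S = tower y S := fun S hS =>
    tower_congr fun i hi => h i (mem_range.1 (mem_powerset.1 hS hi))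
  have hterm : ∀ i ∈ range n, ∀ S ∈ (Ioo i n).powerset,
      x i ^ ∏ j ∈ S, x j = y i ^ ∏ j ∈ S, y j := fun i hi S hS => by
    rw [h i (mem_range.1 hi), prod_congr rfl fun j hj => h j (mem_Ioo.1 (mem_powerset.1 hS hj)).2]
  ext b
  simp +contextual only [nextCandidates, Set.mem_ofPred_eq, htower, hterm]

lemma pow_prod_mem_of_forall_mem_nextCandidates {x : ℕ → ℕ} {n : ℕ}
    (hx : ∀ k < n, x k ∈ nextCandidates A U x k) {i : ℕ} (hi : i < n) {S : Finset ℕ}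
    (hS : S ⊆ Ioo i n) :
    x i ^ ∏ j ∈ S, x j ∈ A ∧ ∀ᶠ e in U, (x i ^ ∏ j ∈ S, x j) ^ e ∈ A := by
  induction n generalizing S with
  | zero => omega
  | succ n ih =>
    obtain ⟨-, htower, hpow, hterm⟩ := hx n n.lt_add_one
    rcases Nat.lt_succ_iff_lt_or_eq.1 hi with hi | rfl
    · by_cases hn : n ∈ S
      · have hS' : S.erase n ∈ (Ioo i n).powerset := mem_powerset.2 fun j hj => by
          have := mem_Ioo.1 (hS (mem_of_mem_erase hj))
          exact mem_Ioo.2 ⟨this.1, by have := ne_of_mem_erase hj; omega⟩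
        rw [← prod_erase_mul S x hn, pow_mul]
        simpa only [← pow_mul, mul_assoc] using hterm i (mem_range.2 hi) _ hS'
      · exact ih (fun k hk => hx k (by omega)) hi fun j hj => by
          have := mem_Ioo.1 (hS hj)
          exact mem_Ioo.2 ⟨this.1, by have : j ≠ n := fun h => hn (h ▸ hj); omega⟩
    · have hS : S = ∅ := subset_empty.1 fun j hj => by have := mem_Ioo.1 (hS hj); omega
      subst hS
      have hxi : x i ^ tower x ∅ ∈ A := htower ∅ (empty_mem_powerset _)
      simp only [tower, sort_empty, List.foldl_nil, pow_one] at hxi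
      simpa using ⟨hxi, hpow⟩

variable (hU : U ∈ aipUltrafilters) (idem : U * U = U) (hA : MIPStar A)
include hU idem hA

lemma nextCandidates_mem {x : ℕ → ℕ} {n : ℕ} (hx : ∀ k < n, x k ∈ nextCandidates A U x k) :
    nextCandidates A U x n ∈ U := by
  have hmem {C : Set ℕ} (hC : MIPStar C) : C ∈ U :=
    hC.mem_ultrafilter fun _ => mip_of_mem_aipUltrafilters hU idem
  have htower : ∀ᶠ b in U, ∀ S ∈ (range n).powerset, b ^ tower x S ∈ A :=
    (eventually_all_finset _).2 fun S _ => hmem (hA.pow_preimage _)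
  have hterm : ∀ᶠ b in U, ∀ i ∈ range n, ∀ S ∈ (Ioo i n).powerset,
      (x i ^ ∏ j ∈ S, x j) ^ b ∈ A ∧ ∀ᶠ e in U, (x i ^ ∏ j ∈ S, x j) ^ (b * e) ∈ A :=
    (eventually_all_finset _).2 fun i hi => (eventually_all_finset _).2 fun S hS =>
      Ultrafilter.eventually_mem_and_eventually_mul_mem idem
        (pow_prod_mem_of_forall_mem_nextCandidates hx (mem_range.1 hi)
          (mem_powerset.1 hS)).2
  filter_upwards [eventually_two_le_of_mem_aipUltrafilters hU, htower,
    hA.eventually_eventually_pow_mem hU, hterm]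
    with b h2 ht hp hv using ⟨h2, ht, hp, hv⟩

end Candidates

theorem mipstar_exp_patterns (A : Set ℕ) (hA : MIPStar A) :
    ∃ x : ℕ → ℕ, (∀ n, 2 ≤ x n) ∧ EXP1 x ∪ EXP2 x ⊆ A := by
  obtain ⟨U, hU, idem⟩ := exists_mul_idempotent_mem_aipUltrafilters
  obtain ⟨x, hx⟩ := exists_seq_forall_mem (nextCandidates A U)
    (fun _ _ _ => nextCandidates_congr)
    fun _ _ h => Ultrafilter.nonempty_of_mem (nextCandidates_mem hU idem hA h)
  refine ⟨x, fun n => (hx n).1, ?_⟩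
  rintro m (⟨l, hl, hchain, rfl⟩ | ⟨i, F, hF, rfl⟩)
  · obtain ⟨L, k, rfl⟩ := l.eq_nil_or_concat'.resolve_left hl
    obtain ⟨hL, -, hLk⟩ := List.pairwise_append.1 (List.isChain_iff_pairwise.1 hchain)
    rw [List.foldl_append, foldl_pow_eq_tower x hL]
    exact (hx k).2.1 _ (mem_powerset.2 fun j hj =>
      mem_range.2 (hLk j (List.mem_toFinset.1 hj) k (List.mem_singleton_self k)))
  · have hF' : F ⊆ Ioo i (F.sup id + i + 1) := fun j hj =>
      mem_Ioo.2 ⟨hF j hj, by have : j ≤ F.sup id := le_sup (f := id) hj; omega⟩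
    exact (pow_prod_mem_of_forall_mem_nextCandidates (fun k _ => hx k) (by omega) hF').1
end

section
/- Let A be an MIP* set. Then there exist x₁, x₂ ∈ A with x₁, x₂ ≥ 2 such that x₁^{x₂} ∈ A and x₂^{x₁} ∈ A. -/
open Finset

/-!
Work in `βℕ` with ultrafilter multiplication. The ultrafilters all of whose members are additive
IP sets form a nonempty closed subsemigroup (any additive idempotent on the positives is one, and
`m • FS y = FS (m • y)` for `m > 0`), so by Ellis' theorem it contains a multiplicative idempotent
`W`. By Hindman's theorem every member of `W` is an MIP set, so every MIP* set lies in `W`, and by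
construction so does every AIP* set. Choose `x₁ ≥ 2` in `A`: then `{b | b ^ x₁ ∈ A}` is MIP* and
`{b | x₁ ^ b ∈ A}` is AIP*, so both lie in `W` together with `A ∩ {b | 2 ≤ b}`, and `x₂` is any
common element.
-/

open Filter

attribute [local instance] Ultrafilter.mul Ultrafilter.add Ultrafilter.semigroup

theorem Ultrafilter.isClosed_setOf_forall_mem {α : Type*} (P : Set α → Prop) :
    IsClosed {U : Ultrafilter α | ∀ s ∈ U, P s} := by
  have h : {U : Ultrafilter α | ∀ s ∈ U, P s} = ⋂ s ∈ {s | ¬ P s}, {U | s ∈ U}ᶜ := by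
    ext U
    simp only [Set.mem_ofPred_eq, Set.mem_iInter, Set.mem_compl_iff]
    exact forall_congr' fun s => not_imp_not.symm
  rw [h]
  exact isClosed_biInter fun s _ => (ultrafilter_isOpen_basic s).isClosed_compl

theorem Hindman.FS_subset_setOf_pos {a : Stream' ℕ} (ha : ∀ i, 0 < a.get i) :
    Hindman.FS a ⊆ {m | 0 < m} := by
  intro m hm
  induction hm with
  | head' a => exact ha 0
  | tail' a m _ ih => exact ih fun i => ha (i + 1)
  | cons' a m _ _ => exact Nat.add_pos_left (ha 0) m

theorem mip_of_mem_of_mul_idempotent {W : Ultrafilter ℕ} (hW : W * W = W)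
    (hpos : {m | 0 < m} ∈ W) {s : Set ℕ} (hs : s ∈ W) : MIP s := by
  obtain ⟨a, ha⟩ := Hindman.exists_FP_of_large W hW _ (inter_mem hs hpos)
  refine ⟨a.get, fun n => (ha (Hindman.FP.singleton a n)).2, ?_⟩
  rintro m ⟨H, hH, rfl⟩
  exact (ha (Hindman.FP.finsetProd a H hH)).1

theorem aip_of_mem_of_add_idempotent {U : Ultrafilter ℕ} (hU : U + U = U)
    (hpos : {m | 0 < m} ∈ U) {s : Set ℕ} (hs : s ∈ U) : AIP s := by
  obtain ⟨a, ha⟩ := Hindman.exists_FS_of_large U hU _ (inter_mem hs hpos)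
  refine ⟨a.get, fun n => (ha (Hindman.FS.singleton a n)).2, ?_⟩
  rintro m ⟨H, hH, rfl⟩
  exact (ha (Hindman.FS.finsetSum a H hH)).1

theorem MIPStar.mem_of_mul_idempotent {A : Set ℕ} (hA : MIPStar A) {W : Ultrafilter ℕ}
    (hW : W * W = W) (hpos : {m | 0 < m} ∈ W) : A ∈ W := by
  by_contra h
  obtain ⟨_, hmem, hnmem⟩ :=
    hA _ (mip_of_mem_of_mul_idempotent hW hpos (Ultrafilter.compl_mem_iff_notMem.mpr h))
  exact hnmem hmem

theorem AIPStar.mem_of_forall_aip {A : Set ℕ} (hA : AIPStar A) {W : Ultrafilter ℕ}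
    (hW : ∀ s ∈ W, AIP s) : A ∈ W := by
  by_contra h
  obtain ⟨_, hmem, hnmem⟩ := hA _ (hW _ (Ultrafilter.compl_mem_iff_notMem.mpr h))
  exact hnmem hmem

theorem aipStar_setOf_two_le : AIPStar {m | 2 ≤ m} := by
  rintro B ⟨x, hx, hFS⟩
  refine ⟨x 0 + x 1, ?_, hFS ⟨{0, 1}, insert_nonempty _ _, (sum_pair zero_ne_one).symm⟩⟩
  have := hx 0
  have := hx 1
  change 2 ≤ x 0 + x 1
  omega

theorem MIPStar.preimage_pow {A : Set ℕ} (hA : MIPStar A) (a : ℕ) :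
    MIPStar {b | b ^ a ∈ A} := by
  rintro B ⟨x, hx, hFP⟩
  have hMIP : MIP ((· ^ a) '' FP x) := by
    refine ⟨fun n => x n ^ a, fun n => pow_pos (hx n) a, ?_⟩
    rintro _ ⟨H, hH, rfl⟩
    exact ⟨∏ t ∈ H, x t, ⟨H, hH, rfl⟩, (prod_pow H a x).symm⟩
  obtain ⟨_, hA', b, hb, rfl⟩ := hA _ hMIP
  exact ⟨b, hA', hFP hb⟩

theorem MIPStar.aipStar_preimage_pow {A : Set ℕ} (hA : MIPStar A) {a : ℕ} (ha : 0 < a) :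
    AIPStar {b | a ^ b ∈ A} := by
  rintro B ⟨y, hy, hFS⟩
  have hMIP : MIP ((a ^ ·) '' FS y) := by
    refine ⟨fun n => a ^ y n, fun n => pow_pos ha _, ?_⟩
    rintro _ ⟨H, hH, rfl⟩
    exact ⟨∑ t ∈ H, y t, ⟨H, hH, rfl⟩, (prod_pow_eq_pow_sum H y a).symm⟩
  obtain ⟨_, hA', b, hb, rfl⟩ := hA _ hMIP
  exact ⟨b, hA', hFS hb⟩

theorem AIP.of_preimage_mul {s : Set ℕ} {m : ℕ} (hm : 0 < m) (h : AIP {n | m * n ∈ s}) :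
    AIP s := by
  obtain ⟨y, hy, hFS⟩ := h
  refine ⟨fun n => m * y n, fun n => Nat.mul_pos hm (hy n), ?_⟩
  rintro _ ⟨H, hH, rfl⟩
  rw [← mul_sum]
  exact hFS ⟨H, hH, rfl⟩

theorem pos_mem_of_forall_aip {U : Ultrafilter ℕ} (hU : ∀ s ∈ U, AIP s) : {m | 0 < m} ∈ U :=
  mem_of_superset (aipStar_setOf_two_le.mem_of_forall_aip hU) fun _ => Nat.lt_of_succ_lt

theorem mul_mem_setOf_forall_aip {U V : Ultrafilter ℕ} (hU : ∀ s ∈ U, AIP s)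
    (hV : ∀ s ∈ V, AIP s) : ∀ s ∈ U * V, AIP s := by
  intro s hs
  have hpos : ∀ᶠ m in (U : Filter ℕ), 0 < m := pos_mem_of_forall_aip hU
  have hmul : ∀ᶠ m in (U : Filter ℕ), {n | m * n ∈ s} ∈ V :=
    (Ultrafilter.eventually_mul U V (· ∈ s)).mp hs
  obtain ⟨m, hm, hmV⟩ := (hpos.and hmul).exists
  exact AIP.of_preimage_mul hm (hV _ hmV)

theorem exists_ultrafilter_forall_aip : ∃ U : Ultrafilter ℕ, ∀ s ∈ U, AIP s := by
  obtain ⟨U, hU, hFS⟩ := Hindman.exists_idempotent_ultrafilter_le_FS (fun _ => 1 : Stream' ℕ)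
  have hpos : {m | 0 < m} ∈ U :=
    mem_of_superset hFS (Hindman.FS_subset_setOf_pos fun _ => Nat.one_pos)
  exact ⟨U, fun s hs => aip_of_mem_of_add_idempotent hU hpos hs⟩

theorem exists_mul_idempotent_forall_aip :
    ∃ W : Ultrafilter ℕ, (∀ s ∈ W, AIP s) ∧ W * W = W :=
  exists_idempotent_in_compact_subsemigroup Ultrafilter.continuous_mul_left _
    exists_ultrafilter_forall_aip
    (Ultrafilter.isClosed_setOf_forall_mem AIP).isCompact
    fun _ hU _ hV => mul_mem_setOf_forall_aip hU hV

theorem mipstar_two_exponentials (A : Set ℕ) (hA : MIPStar A) :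
    ∃ x₁ x₂ : ℕ, x₁ ∈ A ∧ x₂ ∈ A ∧ 2 ≤ x₁ ∧ 2 ≤ x₂ ∧
      x₁ ^ x₂ ∈ A ∧ x₂ ^ x₁ ∈ A := by
  obtain ⟨W, hW, hidem⟩ := exists_mul_idempotent_forall_aip
  have hpos := pos_mem_of_forall_aip hW
  have hAW : A ∩ {m | 2 ≤ m} ∈ W :=
    inter_mem (hA.mem_of_mul_idempotent hidem hpos) (aipStar_setOf_two_le.mem_of_forall_aip hW)
  obtain ⟨x₁, hx₁, hx₁_two⟩ := Ultrafilter.nonempty_of_mem hAW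
  have hexp : {b | x₁ ^ b ∈ A} ∈ W :=
    (hA.aipStar_preimage_pow (zero_lt_two.trans_le hx₁_two)).mem_of_forall_aip hW
  have hbase : {b | b ^ x₁ ∈ A} ∈ W := (hA.preimage_pow x₁).mem_of_mul_idempotent hidem hpos
  obtain ⟨x₂, ⟨hx₂, hx₂_two⟩, hexp₂, hbase₂⟩ :=
    Ultrafilter.nonempty_of_mem (inter_mem hAW (inter_mem hexp hbase))
  exact ⟨x₁, x₂, hx₁, hx₂, hx₁_two, hx₂_two, hexp₂, hbase₂⟩
end
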